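/- With the operators κ, κ', B(·) as in the context, set H = M(u² − (γ + ½ℏ)²). Then the following identity of ℂ-linear endomorphisms of F holds (this is the verification of the Cartan–B relation of the twisted Yangian of type AI under the twisted GKLO homomorphism, in the key case i = j with m_i = 1): H ∘ B(v) − B(v) ∘ H = M(ℏ/(u − v + ½ℏ)) ∘ (B(u + ½ℏ) − B(v)) ∘ H + M(ℏ/(u + v + ½ℏ)) ∘ H ∘ (B(v) − B(−u − ½ℏ)). -/

import Mathlib

/- The twisted GKLO representation of the shifted twisted Yangian of type AI for the nodal
data `m_i = 1`, `λ_i = 0`, `m_{i±1} = 0`:  `F` is the fraction field of `ℂ[ℏ, γ, u, v]`,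
`σ⁻/σ⁺` shift `γ` by `∓ℏ`, `κ = M(1/(2(γ−½ℏ)))∘σ⁻`, `κ' = M(1/(2(γ+(3/2)ℏ)))∘σ⁺`, and
`B(f) = M(1/(f−γ))∘κ + M(1/(f+γ+ℏ))∘κ'`. -/

set_option maxHeartbeats 4000000
set_option synthInstance.maxHeartbeats 1000000

noncomputable section

/-- The fraction field of `ℂ[ℏ, γ, u, v]`. -/
abbrev F4 : Type := FractionRing (MvPolynomial (Fin 4) ℂ)

/-- The indeterminate `ℏ`. -/
def hb : F4 := algebraMap (MvPolynomial (Fin 4) ℂ) F4 (MvPolynomial.X 0)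

/-- The indeterminate `γ`. -/
def gm : F4 := algebraMap (MvPolynomial (Fin 4) ℂ) F4 (MvPolynomial.X 1)

/-- The indeterminate `u`. -/
def uu : F4 := algebraMap (MvPolynomial (Fin 4) ℂ) F4 (MvPolynomial.X 2)

/-- The indeterminate `v`. -/
def vv : F4 := algebraMap (MvPolynomial (Fin 4) ℂ) F4 (MvPolynomial.X 3)

/-- `M(f)`, the multiplication operator `x ↦ f·x`, as a `ℂ`-linear endomorphism of `F`. -/
def Mop (f : F4) : Module.End ℂ F4 := LinearMap.mulLeft ℂ f

/-- `κ = M(1/(2(γ − ½ℏ))) ∘ σ⁻`. -/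
def kap (σm : F4 ≃ₐ[ℂ] F4) : Module.End ℂ F4 :=
  Mop (1 / (2 * (gm - hb / 2))) * σm.toLinearMap

/-- `κ' = M(1/(2(γ + (3/2)ℏ))) ∘ σ⁺`. -/
def kap' (σp : F4 ≃ₐ[ℂ] F4) : Module.End ℂ F4 :=
  Mop (1 / (2 * (gm + 3 * hb / 2))) * σp.toLinearMap

/-- `B(f) = M(1/(f−γ)) ∘ κ + M(1/(f+γ+ℏ)) ∘ κ'`. -/
def Bop (σm σp : F4 ≃ₐ[ℂ] F4) (f : F4) : Module.End ℂ F4 :=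
  Mop (1 / (f - gm)) * kap σm + Mop (1 / (f + gm + hb)) * kap' σp


/-- Evaluation point used to certify nonvanishing of denominators. -/
def x0 : Fin 4 → ℂ := ![1, 10, 100, 1000]

lemma ne_of_double (d : F4) (q : MvPolynomial (Fin 4) ℂ)
    (hq : 2 * d = algebraMap (MvPolynomial (Fin 4) ℂ) F4 q)
    (h : MvPolynomial.eval x0 q ≠ 0) : d ≠ 0 := by
  intro h0
  apply h
  have hz : algebraMap (MvPolynomial (Fin 4) ℂ) F4 q
      = algebraMap (MvPolynomial (Fin 4) ℂ) F4 0 := by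
    rw [← hq, h0, map_zero]; ring
  have := IsFractionRing.injective (MvPolynomial (Fin 4) ℂ) F4 hz
  rw [this, map_zero]

lemma hne1 : gm - hb/2 ≠ 0 := by
  apply ne_of_double _ (2 * MvPolynomial.X 1 - MvPolynomial.X 0)
  · simp only [map_sub, map_mul, map_ofNat, gm, hb]; ring
  · simp [x0]; norm_num

lemma hne2 : gm + 3 * hb/2 ≠ 0 := by
  apply ne_of_double _ (2 * MvPolynomial.X 1 + 3 * MvPolynomial.X 0)
  · simp only [map_add, map_mul, map_ofNat, gm, hb]; ring
  · simp [x0]; norm_num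

lemma hne3 : vv - gm ≠ 0 := by
  apply ne_of_double _ (2 * MvPolynomial.X 3 - 2 * MvPolynomial.X 1)
  · simp only [map_sub, map_mul, map_ofNat, gm, vv]; ring
  · simp [x0]; norm_num

lemma hne4 : vv + gm + hb ≠ 0 := by
  apply ne_of_double _ (2 * MvPolynomial.X 3 + 2 * MvPolynomial.X 1 + 2 * MvPolynomial.X 0)
  · simp only [map_add, map_mul, map_ofNat, gm, vv, hb]; ring
  · simp [x0]; norm_num

lemma hne5 : uu + hb/2 - gm ≠ 0 := by
  apply ne_of_double _ (2 * MvPolynomial.X 2 + MvPolynomial.X 0 - 2 * MvPolynomial.X 1)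
  · simp only [map_sub, map_add, map_mul, map_ofNat, gm, uu, hb]; ring
  · simp [x0]; norm_num

lemma hne6 : uu + hb/2 + gm + hb ≠ 0 := by
  apply ne_of_double _ (2 * MvPolynomial.X 2 + 3 * MvPolynomial.X 0 + 2 * MvPolynomial.X 1)
  · simp only [map_add, map_mul, map_ofNat, gm, uu, hb]; ring
  · simp [x0]; norm_num

lemma hne7 : -uu - hb/2 - gm ≠ 0 := by
  apply ne_of_double _ (-(2 * MvPolynomial.X 2) - MvPolynomial.X 0 - 2 * MvPolynomial.X 1)
  · simp only [map_sub, map_neg, map_mul, map_ofNat, gm, uu, hb]; ring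
  · simp [x0]; norm_num

lemma hne8 : -uu - hb/2 + gm + hb ≠ 0 := by
  apply ne_of_double _ (-(2 * MvPolynomial.X 2) + MvPolynomial.X 0 + 2 * MvPolynomial.X 1)
  · simp only [map_add, map_neg, map_mul, map_ofNat, gm, uu, hb]; ring
  · simp [x0]; norm_num

lemma hne9 : uu - vv + hb/2 ≠ 0 := by
  apply ne_of_double _ (2 * MvPolynomial.X 2 - 2 * MvPolynomial.X 3 + MvPolynomial.X 0)
  · simp only [map_sub, map_add, map_mul, map_ofNat, uu, vv, hb]; ring
  · simp [x0]; norm_num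

lemma hne10 : uu + vv + hb/2 ≠ 0 := by
  apply ne_of_double _ (2 * MvPolynomial.X 2 + 2 * MvPolynomial.X 3 + MvPolynomial.X 0)
  · simp only [map_add, map_mul, map_ofNat, uu, vv, hb]; ring
  · simp [x0]; norm_num


lemma pat1 (c k D3 D5 D9 E : F4) (h3 : D3 ≠ 0) (h5 : D5 ≠ 0) (h9 : D9 ≠ 0)
    (hsum : D3 - D5 = -D9) :
    c / D9 * (1 / D5 * k - 1 / D3 * k) * (D5 * E) = -(c * E) * (1 / D3) * k := by
  field_simp
  linear_combination c * E * k * hsum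

lemma pat2 (c k D3 D7 D10 E : F4) (h3 : D3 ≠ 0) (h7 : D7 ≠ 0) (h10 : D10 ≠ 0)
    (hsum : D7 - D3 = -D10) :
    c / D10 * (-D7 * E) * (1 / D3 * k - 1 / D7 * k) = c * E * (1 / D3) * k := by
  field_simp
  linear_combination -(c * E * k) * hsum

/-- Verification of the Cartan–B relation of the twisted Yangian of type AI under the
twisted GKLO homomorphism, in the key case `i = j` with `m_i = 1`, where the Cartan series
acts by `H = M(u² − (γ + ½ℏ)²)`. -/
theorem gklo_cartan_B_relation_same_node
    (σm σp : F4 ≃ₐ[ℂ] F4)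
    (hσmg : σm gm = gm - hb) (hσmh : σm hb = hb) (hσmu : σm uu = uu) (hσmv : σm vv = vv)
    (hσpg : σp gm = gm + hb) (hσph : σp hb = hb) (hσpu : σp uu = uu) (hσpv : σp vv = vv) :
    Mop (uu ^ 2 - (gm + hb / 2) ^ 2) * Bop σm σp vv -
        Bop σm σp vv * Mop (uu ^ 2 - (gm + hb / 2) ^ 2) =
      Mop (hb / (uu - vv + hb / 2)) *
          (Bop σm σp (uu + hb / 2) - Bop σm σp vv) * Mop (uu ^ 2 - (gm + hb / 2) ^ 2) +
        Mop (hb / (uu + vv + hb / 2)) * Mop (uu ^ 2 - (gm + hb / 2) ^ 2) *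
          (Bop σm σp vv - Bop σm σp (-uu - hb / 2)) := by
  apply LinearMap.ext; intro x
  simp only [Bop, kap, kap', Mop, LinearMap.sub_apply, LinearMap.add_apply, Module.End.mul_apply,
    LinearMap.mulLeft_apply, AlgEquiv.toLinearMap_apply, map_mul, map_sub, map_add, map_pow,
    map_div₀, map_ofNat, hσmg, hσmh, hσmu, hσmv, hσpg, hσph, hσpu, hσpv]
  have p1m := pat1 hb (1 / (2 * (gm - hb / 2))) (vv - gm) (uu + hb / 2 - gm) (uu - vv + hb / 2)
    (uu + gm - hb / 2) hne3 hne5 hne9 (by ring)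
  have p2m := pat2 hb (1 / (2 * (gm - hb / 2))) (vv - gm) (-uu - hb / 2 - gm) (uu + vv + hb / 2)
    (uu - gm - hb / 2) hne3 hne7 hne10 (by ring)
  have p1p := pat1 hb (1 / (2 * (gm + 3 * hb / 2))) (vv + gm + hb) (uu + hb / 2 + gm + hb)
    (uu - vv + hb / 2) (uu - gm - 3 * hb / 2) hne4 hne6 hne9 (by ring)
  have p2p := pat2 hb (1 / (2 * (gm + 3 * hb / 2))) (vv + gm + hb) (-uu - hb / 2 + gm + hb)
    (uu + vv + hb / 2) (uu + gm + hb / 2) hne4 hne8 hne10 (by ring)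
  linear_combination -(p1m + p2m) * σm x - (p1p + p2p) * σp x
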